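/- Let φ: P^1 → P^2 be given by (X1:X2) ↦ (g1:g2:g3)(X1,X2) with g1,g2,g3 homogeneous of degree d whose gcd has degree < d. If (p,q) is a basis of the syzygy module of (g1,g2,g3) over K[X1,X2] (a μ-basis), viewed as polynomials p = Σ p_i(X) T_i and q = Σ q_i(X) T_i in K[X1,X2,T1,T2,T3], then (p,q) is a regular sequence in K[X1,X2,T1,T2,T3]. -/

import Mathlib

/-!
Write `A = K[X₁, X₂]` and identify `K[X₁, X₂, T₁, T₂, T₃]` with `A[T₁, T₂, T₃]`, in which
`p` and `q` become the linear forms `∑ pᵢ Tᵢ` and `∑ qᵢ Tᵢ`. In a UFD two coprime elements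
generating a proper ideal form a regular sequence, and here the ideal is proper because both
forms vanish at the origin. A common factor `h` of two linear forms has degree `0` or `1` in
the `Tᵢ`. In degree `0`, `h` is an element `s` of `A` dividing every `pᵢ`; then `p / s` is a
syzygy, hence a combination of `p` and `q`, and the independence of `p` and `q` makes `s` a
unit. In degree `1`, both forms are multiples of `h` by elements of `A`, so `p` and `q` would
be proportional, contradicting their independence.
-/

open MvPolynomial Pointwise

theorem RingTheory.Sequence.isRegular_pair_of_isRelPrime {R : Type*} [CommRing R] [IsDomain R]
    [DecompositionMonoid R] {a b : R} (hab : IsRelPrime a b) (hI : Ideal.span {a, b} ≠ ⊤) :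
    IsRegular R [a, b] := by
  have ha : a ≠ 0 := by
    rintro rfl
    exact hI (Ideal.eq_top_of_isUnit_mem _ (Ideal.subset_span (by simp))
      (isRelPrime_zero_left.mp hab))
  have mem_smul_top (x : R) : x ∈ a • (⊤ : Submodule R R) ↔ a ∣ x := by
    rw [← Submodule.ideal_span_singleton_smul, Ideal.smul_eq_mul, Ideal.mul_top,
      Ideal.mem_span_singleton]
  refine ⟨.cons (fun x y h => mul_left_cancel₀ ha h)
    ((isWeaklyRegular_singleton_iff _ _).mpr ?_), ?_⟩
  · refine isSMulRegular_iff_right_eq_zero_of_smul.mpr fun x hx => ?_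
    obtain ⟨x, rfl⟩ := Submodule.Quotient.mk_surjective _ x
    rw [← Submodule.Quotient.mk_smul] at hx
    rw [Submodule.Quotient.mk_eq_zero, mem_smul_top] at hx ⊢
    exact hab.dvd_of_dvd_mul_left hx
  · rwa [Ideal.smul_eq_mul, Ideal.mul_top, ne_comm, Ideal.ofList_cons, Ideal.ofList_singleton,
      ← Ideal.span_union, Set.singleton_union]

theorem isUnit_of_forall_dvd_of_syzygy_basis {R ι : Type*} [CommRing R] [IsDomain R]
    [Fintype ι] {g p q : ι → R} (hpsyz : ∑ i, p i * g i = 0)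
    (hgen : ∀ a : ι → R, ∑ i, a i * g i = 0 → ∃ c e : R, ∀ i, a i = c * p i + e * q i)
    (hindep : ∀ c e : R, (∀ i, c * p i + e * q i = 0) → c = 0 ∧ e = 0)
    {s : R} (hs : ∀ i, s ∣ p i) : IsUnit s := by
  choose p' hp' using hs
  have hs0 : s ≠ 0 := by
    rintro rfl
    exact one_ne_zero (hindep 1 0 fun i => by simp [hp' i]).1
  have hsyz : ∑ i, p' i * g i = 0 := by
    refine (mul_eq_zero.mp ?_).resolve_left hs0
    rw [Finset.mul_sum, ← hpsyz]
    exact Finset.sum_congr rfl fun i _ => by rw [hp' i, mul_assoc]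
  obtain ⟨c, e, hce⟩ := hgen p' hsyz
  have hrel : ∀ i, (s * c - 1) * p i + (s * e) * q i = 0 := fun i => by
    linear_combination (-s) * hce i - hp' i
  exact IsUnit.of_mul_eq_one c (sub_eq_zero.mp (hindep _ _ hrel).1)

namespace MvPolynomial

section LinearForm

variable {R σ : Type*} [Fintype σ]

noncomputable def linearForm [CommSemiring R] (p : σ → R) : MvPolynomial σ R :=
  ∑ i, C (p i) * X i

section CommSemiring

variable [CommSemiring R]

theorem coeff_single_linearForm (p : σ → R) (i : σ) :
    coeff (Finsupp.single i 1) (linearForm p) = p i := by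
  classical
  simp [linearForm, coeff_sum, coeff_C_mul, coeff_X, Finsupp.single_left_inj one_ne_zero]

theorem linearForm_eq_zero_iff {p : σ → R} : linearForm p = 0 ↔ p = 0 := by
  refine ⟨fun h => ?_, fun h => by simp [linearForm, h]⟩
  ext i
  rw [← coeff_single_linearForm p i, h, coeff_zero, Pi.zero_apply]

theorem isHomogeneous_linearForm (p : σ → R) : (linearForm p).IsHomogeneous 1 :=
  IsHomogeneous.sum _ _ _ fun i _ => isHomogeneous_C_mul_X (p i) i

end CommSemiring

variable [CommRing R] [IsDomain R]

theorem exists_linearForm_eq_C_mul_of_dvd {p : σ → R} {h : MvPolynomial σ R}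
    (hdvd : h ∣ linearForm p) (hh : h.totalDegree ≠ 0) : ∃ c, linearForm p = C c * h := by
  obtain ⟨a, ha⟩ := hdvd
  by_cases hp : p = 0
  · exact ⟨0, by rw [linearForm_eq_zero_iff.mpr hp, map_zero, zero_mul]⟩
  have hne := linearForm_eq_zero_iff.not.mpr hp
  have hdeg : h.totalDegree + a.totalDegree = 1 := by
    rw [← totalDegree_mul_of_isDomain (left_ne_zero_of_mul (ha ▸ hne))
      (right_ne_zero_of_mul (ha ▸ hne)), ← ha, (isHomogeneous_linearForm p).totalDegree hne]
  rw [totalDegree_eq_zero_iff_eq_C.mp (by omega : a.totalDegree = 0)] at ha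
  exact ⟨_, ha.trans (mul_comm _ _)⟩

theorem isRelPrime_linearForm {p q : σ → R} (hp : ∀ s, (∀ i, s ∣ p i) → IsUnit s)
    (hindep : ∀ c e : R, (∀ i, c * p i + e * q i = 0) → c = 0 ∧ e = 0) :
    IsRelPrime (linearForm p) (linearForm q) := by
  intro h hhp hhq
  by_cases hh : h.totalDegree = 0
  · rw [totalDegree_eq_zero_iff_eq_C.mp hh] at hhp ⊢
    refine (hp _ fun i => ?_).map C
    rw [← coeff_single_linearForm p i]
    exact (C_dvd_iff_dvd_coeff _ _).mp hhp _
  obtain ⟨a, ha⟩ := exists_linearForm_eq_C_mul_of_dvd hhp hh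
  obtain ⟨b, hb⟩ := exists_linearForm_eq_C_mul_of_dvd hhq hh
  have hcross : C b * linearForm p = C a * linearForm q := by rw [ha, hb]; ring
  have hrel : ∀ i, b * p i + (-a) * q i = 0 := fun i => by
    have := congr_arg (coeff (Finsupp.single i 1)) hcross
    simp only [coeff_C_mul, coeff_single_linearForm] at this
    linear_combination this
  have ha0 : a = 0 := neg_eq_zero.mp (hindep b (-a) hrel).2
  exact absurd (hindep 1 0 fun i => by rw [← coeff_single_linearForm p i, ha, ha0]; simp).1
    one_ne_zero

end LinearForm

noncomputable def finAddAlgEquiv (R : Type*) [CommSemiring R] (m n : ℕ) :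
    MvPolynomial (Fin (m + n)) R ≃ₐ[R] MvPolynomial (Fin n) (MvPolynomial (Fin m) R) :=
  (renameEquiv R (finSumFinEquiv.symm.trans (Equiv.sumComm _ _))).trans
    (sumAlgEquiv R (Fin n) (Fin m))

variable {R : Type*} [CommSemiring R] {m n : ℕ}

theorem finAddAlgEquiv_X_natAdd (i : Fin n) :
    finAddAlgEquiv R m n (X (Fin.natAdd m i)) = X i := by
  simp [finAddAlgEquiv]

theorem finAddAlgEquiv_rename_castLE (p : MvPolynomial (Fin m) R) :
    finAddAlgEquiv R m n (rename (Fin.castLE (Nat.le_add_right m n)) p) = C p := by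
  have hcomp : (Sum.swap ∘ finSumFinEquiv.symm) ∘ Fin.castLE (Nat.le_add_right m n) =
      (Sum.inr : Fin m → Fin n ⊕ Fin m) := by
    ext j; exact congr_arg Sum.swap (finSumFinEquiv_symm_apply_castAdd j)
  simpa [finAddAlgEquiv, rename_rename, hcomp] using
    AlgHom.congr_fun (sumAlgEquiv_comp_rename_inr R (Fin n) (Fin m)) p

theorem finAddAlgEquiv_sum_rename_mul_X (r : Fin n → MvPolynomial (Fin m) R) :
    finAddAlgEquiv R m n (∑ i, rename (Fin.castLE (Nat.le_add_right m n)) (r i) * X (Fin.natAdd m i)) =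
      linearForm r := by
  simp only [map_sum, map_mul, finAddAlgEquiv_rename_castLE, finAddAlgEquiv_X_natAdd,
    linearForm]

end MvPolynomial

theorem stmt9 {K : Type*} [Field K]
    (g : Fin 3 → MvPolynomial (Fin 2) K)
    (p q : Fin 3 → MvPolynomial (Fin 2) K)
    (hpsyz : ∑ i, p i * g i = 0)
    -- `(p, q)` generate the syzygy module of `(g1, g2, g3)` ...
    (hgen : ∀ a : Fin 3 → MvPolynomial (Fin 2) K, ∑ i, a i * g i = 0 →
      ∃ c e : MvPolynomial (Fin 2) K, ∀ i, a i = c * p i + e * q i)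
    -- ... and are linearly independent over `K[X1,X2]`
    (hindep : ∀ c e : MvPolynomial (Fin 2) K, (∀ i, c * p i + e * q i = 0) →
      c = 0 ∧ e = 0) :
    RingTheory.Sequence.IsRegular (MvPolynomial (Fin 5) K)
      [∑ i, rename (Fin.castLE (by omega)) (p i) * X (Fin.natAdd 2 i),
       ∑ i, rename (Fin.castLE (by omega)) (q i) * X (Fin.natAdd 2 i)] := by
  refine RingTheory.Sequence.isRegular_pair_of_isRelPrime ?_ ?_
  · refine IsRelPrime.of_map (finAddAlgEquiv K 2 3) ?_
    rw [finAddAlgEquiv_sum_rename_mul_X p, finAddAlgEquiv_sum_rename_mul_X q]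
    exact isRelPrime_linearForm (fun _ => isUnit_of_forall_dvd_of_syzygy_basis hpsyz hgen hindep)
      hindep
  · refine ne_top_of_le_ne_top (RingHom.ker_ne_top constantCoeff) ?_
    simp [Ideal.span_le, Set.insert_subset_iff]
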